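/- arXiv:2410.01700 — 2 statements merged into one kernel-verified Lean document; each statement's English description precedes it below -/
import Mathlib

section
/- Let G=(V,E) be a connected graph and z₁⋆,…,z_n⋆ ∈ ℝᵈ be limits of sequences z_i^k satisfying the update y_i^{k+1} = y_i^k + Σ_{j∈N(i)} p_{i,j}^k ⊙ (z_i^{k+1} − z_j^{k+1}), where y_i^k also converge, and each coordinate of p_{i,j}^k lies in [m, M] with 0 < m ≤ M < ∞. Then z₁⋆ = z₂⋆ = ⋯ = z_n⋆. -/
open Filter

theorem stmt9 {n d : ℕ} (G : SimpleGraph (Fin n)) [DecidableRel G.Adj]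
    (hconn : G.Connected)
    (y z : ℕ → Fin n → Fin d → ℝ) (p : ℕ → Fin n → Fin n → Fin d → ℝ)
    (m M : ℝ) (hm : 0 < m) (hmM : m ≤ M)
    (hbound : ∀ k i j l, G.Adj i j → m ≤ p k i j l ∧ p k i j l ≤ M)
    (hupd : ∀ k i, y (k + 1) i
      = y k i + ∑ j ∈ G.neighborFinset i, p k i j * (z (k + 1) i - z (k + 1) j))
    (zs ys : Fin n → Fin d → ℝ)
    (hzc : ∀ i, Filter.Tendsto (fun k => z k i) Filter.atTop (nhds (zs i)))
    (hyc : ∀ i, Filter.Tendsto (fun k => y k i) Filter.atTop (nhds (ys i))) :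
    ∀ i j, zs i = zs j := by
  have hM : 0 < M := lt_of_lt_of_le hm hmM
  -- key lemma: if a is at least all its neighbors in coordinate l, then any neighbor equals a
  have key : ∀ (l : Fin d) (a b : Fin n), G.Adj a b →
      (∀ c, G.Adj a c → zs c l ≤ zs a l) → zs b l = zs a l := by
    intro l a b hab hmax
    by_contra hne
    have hlt : zs b l < zs a l := lt_of_le_of_ne (hmax b hab) hne
    set gap := zs a l - zs b l with hgap
    have hgap0 : 0 < gap := sub_pos.mpr hlt
    have hden : 0 < m + (n : ℝ) * M := by positivity
    set ε := m * gap / (8 * (m + (n : ℝ) * M)) with hε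
    have hε0 : 0 < ε := by positivity
    have hεle : ε ≤ gap / 8 := by
      rw [hε, div_le_div_iff₀ (by positivity) (by norm_num)]
      have h1 : (0:ℝ) ≤ (n : ℝ) * M := by positivity
      nlinarith
    -- eventually all coordinates are ε-close to their limits
    have hev : ∀ᶠ k in atTop, ∀ c, |z k c l - zs c l| < ε := by
      rw [eventually_all]
      intro c
      have h1 : Tendsto (fun k => z k c l) atTop (nhds (zs c l)) :=
        ((continuous_apply l).tendsto _).comp (hzc c)
      obtain ⟨N, hN⟩ := Metric.tendsto_atTop.1 h1 ε hε0
      exact eventually_atTop.2 ⟨N, fun k hk => by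
        have := hN k hk; rwa [Real.dist_eq] at this⟩
    obtain ⟨K, hK⟩ := eventually_atTop.1 hev
    have hbmem : b ∈ G.neighborFinset a := (SimpleGraph.mem_neighborFinset _ _ _).2 hab
    -- coordinate-l version of the update
    have hstep : ∀ k, y (k + 1) a l = y k a l +
        ∑ j' ∈ G.neighborFinset a, p k a j' l * (z (k + 1) a l - z (k + 1) j' l) := by
      intro k
      have h := congrFun (hupd k a) l
      simpa [Finset.sum_apply] using h
    -- lower bound on the increment
    have hsum : ∀ k, K ≤ k → m * gap / 2 ≤
        ∑ j' ∈ G.neighborFinset a, p k a j' l * (z (k + 1) a l - z (k + 1) j' l) := by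
      intro k hk
      have hz : ∀ c, |z (k + 1) c l - zs c l| < ε := hK (k + 1) (le_trans hk (Nat.le_succ k))
      have hdiff : ∀ c, zs a l - zs c l - 2 * ε ≤ z (k + 1) a l - z (k + 1) c l := by
        intro c
        have h1 := abs_lt.1 (hz a)
        have h2 := abs_lt.1 (hz c)
        linarith [h1.1, h1.2, h2.1, h2.2]
      have hlow : ∀ j' ∈ G.neighborFinset a,
          -(2 * M * ε) ≤ p k a j' l * (z (k + 1) a l - z (k + 1) j' l) := by
        intro j' hj'
        have hadj := (SimpleGraph.mem_neighborFinset _ _ _).1 hj'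
        obtain ⟨hpm, hpM⟩ := hbound k a j' l hadj
        have hd : -(2 * ε) ≤ z (k + 1) a l - z (k + 1) j' l := by
          have := hdiff j'
          have h2 := hmax j' hadj
          linarith
        rcases le_or_gt 0 (z (k + 1) a l - z (k + 1) j' l) with h | h
        · have h0 : 0 ≤ p k a j' l * (z (k + 1) a l - z (k + 1) j' l) :=
            mul_nonneg (le_trans hm.le hpm) h
          nlinarith
        · have h1 : M * (z (k + 1) a l - z (k + 1) j' l)
              ≤ p k a j' l * (z (k + 1) a l - z (k + 1) j' l) :=
            mul_le_mul_of_nonpos_right hpM h.le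
          have h2 : M * (-(2 * ε)) ≤ M * (z (k + 1) a l - z (k + 1) j' l) :=
            mul_le_mul_of_nonneg_left hd hM.le
          nlinarith
      have hbterm : m * (gap - 2 * ε) ≤ p k a b l * (z (k + 1) a l - z (k + 1) b l) := by
        obtain ⟨hpm, hpM⟩ := hbound k a b l hab
        have hd : gap - 2 * ε ≤ z (k + 1) a l - z (k + 1) b l := by
          have := hdiff b; rw [hgap]; linarith
        have hg2 : 0 ≤ gap - 2 * ε := by linarith
        exact mul_le_mul hpm hd hg2 (le_trans hm.le hpm)
      have hrest : (((G.neighborFinset a).erase b).card : ℝ) * (-(2 * M * ε)) ≤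
          ∑ j' ∈ (G.neighborFinset a).erase b,
            p k a j' l * (z (k + 1) a l - z (k + 1) j' l) := by
        have := Finset.card_nsmul_le_sum ((G.neighborFinset a).erase b)
          (fun j' => p k a j' l * (z (k + 1) a l - z (k + 1) j' l)) (-(2 * M * ε))
          (fun j' hj' => hlow j' (Finset.mem_of_mem_erase hj'))
        rwa [nsmul_eq_mul] at this
      have hcard : (((G.neighborFinset a).erase b).card : ℝ) ≤ n := by
        have h1 : ((G.neighborFinset a).erase b).card ≤ Fintype.card (Fin n) :=
          Finset.card_le_univ _
        exact_mod_cast h1.trans_eq (Fintype.card_fin n)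
      have hrest2 : (n : ℝ) * (-(2 * M * ε)) ≤
          ∑ j' ∈ (G.neighborFinset a).erase b,
            p k a j' l * (z (k + 1) a l - z (k + 1) j' l) := by
        refine le_trans ?_ hrest
        apply mul_le_mul_of_nonpos_right hcard
        nlinarith
      rw [← Finset.add_sum_erase _ _ hbmem]
      have hεeq : 2 * (m + (n : ℝ) * M) * ε = m * gap / 4 := by
        rw [hε]; field_simp; ring
      have hmg : 0 < m * gap := mul_pos hm hgap0
      nlinarith [hbterm, hrest2]
    -- growth of y along the sequence
    have hgrow : ∀ t : ℕ, y K a l + t * (m * gap / 2) ≤ y (K + t) a l := by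
      intro t
      induction t with
      | zero => simp
      | succ t ih =>
        have h1 := hsum (K + t) (Nat.le_add_right K t)
        have h2 := hstep (K + t)
        have h3 : y (K + (t + 1)) a l = y ((K + t) + 1) a l := by ring_nf
        rw [h3, h2]
        push_cast
        linarith
    have hy1 : Tendsto (fun k => y k a l) atTop (nhds (ys a l)) :=
      ((continuous_apply l).tendsto _).comp (hyc a)
    have hy2 : Tendsto (fun t => y (K + t) a l) atTop (nhds (ys a l)) :=
      hy1.comp (tendsto_atTop_mono (fun t => Nat.le_add_left t K) tendsto_id)
    have hl : Tendsto (fun t : ℕ => y K a l + (t : ℝ) * (m * gap / 2)) atTop atTop := by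
      apply tendsto_atTop_add_const_left
      exact tendsto_natCast_atTop_atTop.atTop_mul_const (by positivity)
    exact not_tendsto_atTop_of_tendsto_nhds hy2 (tendsto_atTop_mono hgrow hl)
  intro i j
  funext l
  haveI : Nonempty (Fin n) := ⟨i⟩
  obtain ⟨i0, hi0⟩ := Finite.exists_max (fun v => zs v l)
  have claim : ∀ (u v : Fin n) (w : G.Walk u v), zs u l = zs i0 l → zs v l = zs i0 l := by
    intro u v w
    induction w with
    | nil => exact id
    | @cons a x c h w ih =>
      intro hu
      refine ih ?_
      have hmaxu : ∀ c, G.Adj a c → zs c l ≤ zs a l := fun c _ =>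
        le_of_le_of_eq (hi0 c) hu.symm
      rw [key l a x h hmaxu, hu]
  have all_eq : ∀ v, zs v l = zs i0 l := by
    intro v
    obtain ⟨w⟩ := hconn.preconnected i0 v
    exact claim i0 v w rfl
  rw [all_eq i, all_eq j]
end

section
/- Consider the decentralized network on a strongly connected graph G=(V,E) with |V|=n, local convex L-smooth functions f_i : ℝᵈ → ℝ and convex r : ℝᵈ → ℝ. Suppose sequences (x_i^k, y_i^k, z_i^k) are generated by z_i^{k+1} = prox_{r, Diag(p_i^k)}(x_i^k − p_i^k ⊙ (∇f_i(x_i^k) + y_i^k)), y_i^{k+1} = y_i^k + Σ_{j∈N(i)} p_{i,j,1}^k ⊙ (z_i^{k+1} − z_j^{k+1}), x_i^{k+1} = z_i^{k+1} − Σ_{j∈N(i)} p_{i,j,2}^k ⊙ (z_i^{k+1} − z_j^{k+1}), with y_i^0 = 0, symmetry p_{i,j,1}^k = p_{j,i,1}^k, and coordinatewise bounds m ≤ [p_i^k]_l, m ≤ [p_{i,j,1}^k]_l ≤ M, |[p_{i,j,2}^k]_l| ≤ M for 0 < m < M < ∞. If (x_i^k, y_i^k, z_i^k) converge to limits (x_i⋆,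 y_i⋆, z_i⋆) for all i, then there exists x⋆ minimizing (1/n)Σ_i f_i(x) + r(x) with x_i⋆ = z_i⋆ = x⋆ and y_i⋆ ∈ −∇f_i(x⋆) − ∂r(x⋆) for all i. -/
/-!
Passing to the limit in the `y`-update, `Σ_{j ∈ N(i)} p_{i,j,1}^k ⊙ (z_i⋆ - z_j⋆) → 0`; as the
weights stay in `[m, M]`, a discrete maximum principle on the connected graph forces consensus
`z_i⋆ = x⋆`, and the `x`-update then gives `x_i⋆ = x⋆`. Symmetry of `p_{i,j,1}` makes the
`y`-update conserve `Σ_i y_i`, so `Σ_i y_i⋆ = 0`. The optimality condition of the prox step reads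
`(x_i^k - z_i^{k+1}) / p_i^k - ∇f_i(x_i^k) - y_i^k ∈ ∂r(z_i^{k+1})`, and the graph of `∂r` is
closed because `r` is lower semicontinuous, so `-∇f_i(x⋆) - y_i⋆ ∈ ∂r(x⋆)`. Hence `-y_i⋆` is a
subgradient of `f_i + r` at `x⋆`, and these subgradients sum to zero.
-/

open Matrix

/-- Coordinatewise gradient of `f : ℝᵈ → ℝ` at `x`. -/
noncomputable def grad {d : ℕ} (f : (Fin d → ℝ) → ℝ) (x : Fin d → ℝ) : Fin d → ℝ :=
  fun l => fderiv ℝ f x (Pi.single l 1)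

/-- Convex subdifferential of `r` at `z`. -/
def subdiff {d : ℕ} (r : (Fin d → ℝ) → ℝ) (z : Fin d → ℝ) : Set (Fin d → ℝ) :=
  {g | ∀ x, r z + g ⬝ᵥ (x - z) ≤ r x}

/-- Diagonally-weighted proximal objective `r(u) + (1/2)‖u - w‖²_{Diag(p)⁻¹}`. -/
noncomputable def diagProxObj {d : ℕ} (r : (Fin d → ℝ) → ℝ) (p : Fin d → ℝ)
    (w u : Fin d → ℝ) : ℝ :=
  r u + (1 / 2) * ∑ l, (u l - w l) ^ 2 / p l

open Filter Topology Set

section Subdifferential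

variable {d : ℕ}

lemma fderiv_apply_eq_grad_dotProduct (f : (Fin d → ℝ) → ℝ) (x v : Fin d → ℝ) :
    fderiv ℝ f x v = grad f x ⬝ᵥ v := by
  conv_lhs => rw [← Finset.univ_sum_single v]
  simp only [map_sum, grad, dotProduct]
  refine Finset.sum_congr rfl fun l _ => ?_
  rw [mul_comm, ← smul_eq_mul, ← map_smul, ← Pi.single_smul, smul_eq_mul, mul_one]

lemma continuous_grad {f : (Fin d → ℝ) → ℝ} (hf : Continuous (fderiv ℝ f)) :
    Continuous (grad f) :=
  continuous_pi fun _ => hf.clm_apply continuous_const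

lemma grad_mem_subdiff {f : (Fin d → ℝ) → ℝ} (hconv : ConvexOn ℝ univ f)
    (hdiff : Differentiable ℝ f) (z : Fin d → ℝ) : grad f z ∈ subdiff f z := by
  intro u
  set g : ℝ → ℝ := fun t => f (z + t • (u - z))
  have hg : ConvexOn ℝ univ g := by
    simpa [g, Function.comp_def, AffineMap.lineMap_apply_module', add_comm] using
      hconv.comp_affineMap (AffineMap.lineMap z u)
  have hderiv : HasDerivAt g (fderiv ℝ f z (u - z)) 0 := by
    have hline : HasDerivAt (fun t : ℝ => z + t • (u - z)) (u - z) 0 := by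
      simpa using ((hasDerivAt_id (0 : ℝ)).smul_const (u - z)).const_add z
    have hf : HasFDerivAt f (fderiv ℝ f z) (z + (0 : ℝ) • (u - z)) := by
      simpa using (hdiff z).hasFDerivAt
    exact hf.comp_hasDerivAt 0 hline
  have := hg.le_slope_of_hasDerivAt (mem_univ 0) (mem_univ 1) zero_lt_one hderiv
  simp [g, slope_def_field, fderiv_apply_eq_grad_dotProduct] at this
  linarith [dotProduct_sub (grad f z) u z]

lemma add_mem_subdiff {f r : (Fin d → ℝ) → ℝ} {g h z : Fin d → ℝ} (hg : g ∈ subdiff f z)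
    (hh : h ∈ subdiff r z) : g + h ∈ subdiff (f + r) z := fun u => by
  have := hg u
  have := hh u
  simp only [Pi.add_apply, add_dotProduct]
  linarith

lemma sum_le_sum_of_mem_subdiff {ι : Type*} (s : Finset ι) {F : ι → (Fin d → ℝ) → ℝ}
    {g : ι → Fin d → ℝ} {z : Fin d → ℝ} (hg : ∀ i ∈ s, g i ∈ subdiff (F i) z)
    (hsum : ∑ i ∈ s, g i = 0) (u : Fin d → ℝ) : ∑ i ∈ s, F i z ≤ ∑ i ∈ s, F i u := by
  have hdot : ∑ i ∈ s, g i ⬝ᵥ (u - z) = 0 := by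
    rw [← sum_dotProduct, hsum, zero_dotProduct]
  calc ∑ i ∈ s, F i z = ∑ i ∈ s, (F i z + g i ⬝ᵥ (u - z)) := by
        rw [Finset.sum_add_distrib, hdot, add_zero]
    _ ≤ ∑ i ∈ s, F i u := Finset.sum_le_sum fun i hi => hg i hi u

lemma mem_subdiff_of_tendsto {ι : Type*} {l : Filter ι} [l.NeBot] {r : (Fin d → ℝ) → ℝ}
    (hr : LowerSemicontinuous r) {g z : ι → Fin d → ℝ} {g₀ z₀ : Fin d → ℝ}
    (hg : Tendsto g l (𝓝 g₀)) (hz : Tendsto z l (𝓝 z₀))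
    (hmem : ∀ᶠ k in l, g k ∈ subdiff r (z k)) : g₀ ∈ subdiff r z₀ := by
  intro u
  refine le_of_forall_pos_le_add fun ε hε => ?_
  have hdot : Tendsto (fun k => g k ⬝ᵥ (u - z k)) l (𝓝 (g₀ ⬝ᵥ (u - z₀))) :=
    ((continuous_fst.dotProduct continuous_snd).tendsto _).comp
      (hg.prodMk_nhds (tendsto_const_nhds.sub hz))
  refine le_of_tendsto (tendsto_const_nhds.add hdot) ?_
  filter_upwards [hmem, hz.eventually (hr z₀ (r z₀ - ε) (by linarith))] with k hk hrk
  linarith [hk u]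

lemma le_of_forall_le_add_mul {a b c : ℝ} (h : ∀ t : ℝ, 0 < t → t ≤ 1 → a ≤ b + t * c) :
    a ≤ b := by
  have hlim : Tendsto (fun t : ℝ => b + t * c) (𝓝[>] 0) (𝓝 b) :=
    tendsto_nhdsWithin_of_tendsto_nhds <|
      (by fun_prop : Continuous fun t : ℝ => b + t * c).tendsto' 0 b (by simp)
  refine ge_of_tendsto hlim ?_
  filter_upwards [Ioc_mem_nhdsGT one_pos] with t ht using h t ht.1 ht.2

lemma div_mem_subdiff_of_diagProxObj_le {r : (Fin d → ℝ) → ℝ} (hr : ConvexOn ℝ univ r)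
    {p w z : Fin d → ℝ} (hp : ∀ l, 0 < p l)
    (hmin : ∀ u, diagProxObj r p w z ≤ diagProxObj r p w u) : (w - z) / p ∈ subdiff r z := by
  intro u
  set a := u - z
  set C := ∑ l, a l ^ 2 / p l
  refine le_of_forall_le_add_mul (c := C / 2) fun t ht ht1 => ?_
  have hconv : r (z + t • a) ≤ (1 - t) * r z + t * r u := by
    have h := hr.2 (mem_univ z) (mem_univ u) (by linarith : (0 : ℝ) ≤ 1 - t) ht.le (by ring)
    have hzt : z + t • a = (1 - t) • z + t • u := by
      simp only [a, smul_sub, sub_smul, one_smul]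
      abel
    rwa [hzt]
  have hquad : ∑ l, ((z + t • a) l - w l) ^ 2 / p l
      = ∑ l, (z l - w l) ^ 2 / p l - 2 * t * (((w - z) / p) ⬝ᵥ a) + t ^ 2 * C := by
    simp only [C, dotProduct, Finset.mul_sum, ← Finset.sum_sub_distrib,
      ← Finset.sum_add_distrib]
    refine Finset.sum_congr rfl fun l _ => ?_
    have := (hp l).ne'
    simp only [Pi.add_apply, Pi.smul_apply, Pi.sub_apply, Pi.div_apply, smul_eq_mul]
    field_simp
    ring
  have hmin' := hmin (z + t • a)
  simp only [diagProxObj, hquad] at hmin'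
  have : t * (r z + ((w - z) / p) ⬝ᵥ a) ≤ t * (r u + t * (C / 2)) := by nlinarith
  exact le_of_mul_le_mul_left this ht

end Subdifferential

lemma eq_zero_of_tendsto_sum_mul {ι : Type*} {s : Finset ι} {m M : ℝ} (hm : 0 < m)
    {a : ι → ℝ} (ha : ∀ j ∈ s, 0 ≤ a j) {P D : ℕ → ι → ℝ}
    (hP : ∀ k, ∀ j ∈ s, m ≤ P k j ∧ P k j ≤ M)
    (hD : ∀ j ∈ s, Tendsto (fun k => D k j) atTop (𝓝 (a j)))
    (hS : Tendsto (fun k => ∑ j ∈ s, P k j * D k j) atTop (𝓝 0)) : ∀ j ∈ s, a j = 0 := by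
  have herr : Tendsto (fun k => ∑ j ∈ s, P k j * (D k j - a j)) atTop (𝓝 0) := by
    have hbdd : ∀ j ∈ s, IsBoundedUnder (· ≤ ·) atTop fun k => ‖P k j‖ := fun j hj =>
      isBoundedUnder_of ⟨M, fun k => by
        have := hP k j hj
        rw [Real.norm_eq_abs, abs_le]
        constructor <;> linarith⟩
    simpa using tendsto_finsetSum s fun j hj =>
      isBoundedUnder_le_mul_tendsto_zero (hbdd j hj) (by simpa using (hD j hj).sub_const (a j))
  have hlim : Tendsto (fun k => ∑ j ∈ s, P k j * a j) atTop (𝓝 0) := by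
    simpa [mul_sub] using hS.sub herr
  have hle : m * ∑ j ∈ s, a j ≤ 0 := ge_of_tendsto' hlim fun k => by
    rw [Finset.mul_sum]
    exact Finset.sum_le_sum fun j hj => mul_le_mul_of_nonneg_right (hP k j hj).1 (ha j hj)
  have hsum : ∑ j ∈ s, a j = 0 :=
    le_antisymm (nonpos_of_mul_nonpos_right hle hm) (Finset.sum_nonneg ha)
  exact (Finset.sum_eq_zero_iff_of_nonneg ha).mp hsum

namespace SimpleGraph

variable {V : Type*} {G : SimpleGraph V}

lemma sum_sum_neighborFinset_eq_zero [Fintype V] [DecidableRel G.Adj] {β : Type*}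
    [AddCommMonoid β] (F : V → V → β) (hF : ∀ i j, G.Adj i j → F i j + F j i = 0) :
    ∑ i, ∑ j ∈ G.neighborFinset i, F i j = 0 := by
  rw [Finset.sum_sigma']
  refine Finset.sum_involution (fun a _ => ⟨a.2, a.1⟩) (fun a ha => ?_) (fun a ha _ => ?_)
    (fun a ha => ?_) (fun _ _ => rfl)
  all_goals simp only [Finset.mem_sigma, mem_neighborFinset] at ha
  · exact hF _ _ ha.2
  · exact fun h => ha.2.ne (congrArg Sigma.fst h).symm
  · simpa using ha.2.symm

lemma Preconnected.forall_of_adj {P : V → Prop} (hG : G.Preconnected)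
    (hP : ∀ u v, G.Adj u v → P u → P v) {u : V} (hu : P u) (v : V) : P v := by
  induction (reachable_iff_reflTransGen u v).mp (hG u v) with
  | refl => exact hu
  | tail _ hadj ih => exact hP _ _ hadj ih

lemma Connected.apply_eq_apply_of_maximum_principle [Finite V] {α : Type*} [LinearOrder α]
    (hG : G.Connected) {w : V → α}
    (hw : ∀ i, (∀ j, G.Adj i j → w j ≤ w i) → ∀ j, G.Adj i j → w j = w i) (i j : V) :
    w i = w j := by
  have := hG.nonempty
  obtain ⟨i₀, hi₀⟩ := Finite.exists_max w
  have hmax : ∀ v, w v = w i₀ := hG.preconnected.forall_of_adj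
    (fun u v huv hu => (hw u (fun j _ => hu ▸ hi₀ j) v huv).trans hu) rfl
  rw [hmax i, hmax j]

variable [Fintype V] [DecidableRel G.Adj] {d : ℕ}

lemma Connected.eq_of_tendsto_sum_mul_sub (hG : G.Connected) {m M : ℝ} (hm : 0 < m)
    {P : ℕ → V → V → Fin d → ℝ} (hP : ∀ k i j l, G.Adj i j → m ≤ P k i j l ∧ P k i j l ≤ M)
    {z : ℕ → V → Fin d → ℝ} {zs : V → Fin d → ℝ}
    (hz : ∀ i, Tendsto (fun k => z k i) atTop (𝓝 (zs i)))
    (hS : ∀ i, Tendsto (fun k => ∑ j ∈ G.neighborFinset i, P k i j * (z k i - z k j)) atTop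
      (𝓝 0))
    (i j : V) : zs i = zs j := by
  funext l
  refine hG.apply_eq_apply_of_maximum_principle (w := fun i => zs i l)
    (fun i hi j hij => ?_) i j
  have := eq_zero_of_tendsto_sum_mul (s := G.neighborFinset i) hm (a := fun j => zs i l - zs j l)
    (fun j hj => sub_nonneg.mpr (hi j (by simpa using hj))) (P := fun k j => P k i j l)
    (D := fun k j => z k i l - z k j l) (fun k j hj => hP k i j l (by simpa using hj))
    (fun j _ => (tendsto_pi_nhds.mp (hz i) l).sub (tendsto_pi_nhds.mp (hz j) l))
    (by simpa [Finset.sum_apply] using tendsto_pi_nhds.mp (hS i) l) j (by simpa using hij)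
  linarith

lemma tendsto_sum_mul_sub_of_forall_eq {M : ℝ} {Q : ℕ → V → V → Fin d → ℝ}
    (hQ : ∀ k i j l, G.Adj i j → |Q k i j l| ≤ M) {z : ℕ → V → Fin d → ℝ}
    {zs : V → Fin d → ℝ} (hz : ∀ i, Tendsto (fun k => z k i) atTop (𝓝 (zs i)))
    (hzs : ∀ i j, zs i = zs j) (i : V) :
    Tendsto (fun k => ∑ j ∈ G.neighborFinset i, Q k i j * (z k i - z k j)) atTop (𝓝 0) := by
  refine tendsto_pi_nhds.mpr fun l => ?_
  simp only [Finset.sum_apply, Pi.mul_apply, Pi.sub_apply, Pi.zero_apply]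
  have hterm : ∀ j ∈ G.neighborFinset i,
      Tendsto (fun k => Q k i j l * (z k i l - z k j l)) atTop (𝓝 0) := fun j hj =>
    isBoundedUnder_le_mul_tendsto_zero
      (isBoundedUnder_of ⟨M, fun k => hQ k i j l (by simpa using hj)⟩)
      (by simpa [hzs i j] using (tendsto_pi_nhds.mp (hz i) l).sub (tendsto_pi_nhds.mp (hz j) l))
  simpa using tendsto_finsetSum _ hterm

lemma sum_eq_zero_of_symmetric_updates {R : Type*} [NonUnitalNonAssocRing R]
    {P : ℕ → V → V → R} (hP : ∀ k i j, G.Adj i j → P k i j = P k j i) {y z : ℕ → V → R}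
    (hy0 : ∀ i, y 0 i = 0)
    (hy : ∀ k i, y (k + 1) i
      = y k i + ∑ j ∈ G.neighborFinset i, P k i j * (z (k + 1) i - z (k + 1) j))
    (k : ℕ) : ∑ i, y k i = 0 := by
  induction k with
  | zero => simp [hy0]
  | succ k ih =>
    simp only [hy, Finset.sum_add_distrib, ih, zero_add]
    refine G.sum_sum_neighborFinset_eq_zero _ fun i j hij => ?_
    rw [hP k i j hij, ← mul_add]
    simp

end SimpleGraph

lemma neg_grad_sub_mem_subdiff_of_tendsto {d : ℕ} {f r : (Fin d → ℝ) → ℝ}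
    (hf : Continuous (fderiv ℝ f)) (hr : ConvexOn ℝ univ r) (hlsc : LowerSemicontinuous r)
    {m : ℝ} (hm : 0 < m) {p : ℕ → Fin d → ℝ} (hp : ∀ k l, m ≤ p k l) {x y z : ℕ → Fin d → ℝ}
    (hz : ∀ k u,
      diagProxObj r (p k) (x k - fun l => p k l * (grad f (x k) l + y k l)) (z (k + 1))
        ≤ diagProxObj r (p k) (x k - fun l => p k l * (grad f (x k) l + y k l)) u)
    {xs ys : Fin d → ℝ} (hxc : Tendsto x atTop (𝓝 xs)) (hyc : Tendsto y atTop (𝓝 ys))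
    (hzc : Tendsto (fun k => z (k + 1)) atTop (𝓝 xs)) :
    -(grad f xs) - ys ∈ subdiff r xs := by
  have hpos : ∀ k l, 0 < p k l := fun k l => hm.trans_le (hp k l)
  have hmem : ∀ k,
      (x k - z (k + 1)) * (p k)⁻¹ - grad f (x k) - y k ∈ subdiff r (z (k + 1)) := by
    intro k
    convert div_mem_subdiff_of_diagProxObj_le hr (hpos k) (hz k) using 1
    funext l
    have := (hpos k l).ne'
    simp only [Pi.sub_apply, Pi.mul_apply, Pi.inv_apply, Pi.div_apply]
    field_simp
    ring
  have hinv : ∀ k, ‖(p k)⁻¹‖ ≤ m⁻¹ := fun k =>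
    (pi_norm_le_iff_of_nonneg (by positivity)).mpr fun l => by
      rw [Pi.inv_apply, norm_inv, Real.norm_of_nonneg (hpos k l).le]
      exact inv_anti₀ hm (hp k l)
  have hstep : Tendsto (fun k => (x k - z (k + 1)) * (p k)⁻¹) atTop (𝓝 0) :=
    Tendsto.zero_mul_isBoundedUnder_le (by simpa using hxc.sub hzc)
      (isBoundedUnder_of ⟨m⁻¹, hinv⟩)
  refine mem_subdiff_of_tendsto hlsc ?_ hzc (Eventually.of_forall hmem)
  simpa using (hstep.sub (((continuous_grad hf).tendsto xs).comp hxc)).sub hyc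

lemma average_add_le_of_mem_subdiff {n d : ℕ} (hn : 0 < n) {f : Fin n → (Fin d → ℝ) → ℝ}
    {r : (Fin d → ℝ) → ℝ} {g : Fin n → Fin d → ℝ} {z : Fin d → ℝ}
    (hg : ∀ i, g i ∈ subdiff (f i + r) z) (hsum : ∑ i, g i = 0) (u : Fin d → ℝ) :
    (n : ℝ)⁻¹ * ∑ i, f i z + r z ≤ (n : ℝ)⁻¹ * ∑ i, f i u + r u := by
  have h := sum_le_sum_of_mem_subdiff Finset.univ (fun i _ => hg i) hsum u
  simp only [Pi.add_apply, Finset.sum_add_distrib, Finset.sum_const, Finset.card_univ,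
    Fintype.card_fin, nsmul_eq_mul] at h
  have hn' : (0 : ℝ) < n := by exact_mod_cast hn
  have := mul_le_mul_of_nonneg_left h (inv_nonneg.mpr hn'.le)
  rwa [mul_add, mul_add, inv_mul_cancel_left₀ hn'.ne', inv_mul_cancel_left₀ hn'.ne'] at this

theorem stmt11_general {n d : ℕ} (hn : 0 < n)
    (G : SimpleGraph (Fin n)) [DecidableRel G.Adj] (hconn : G.Connected)
    (f : Fin n → (Fin d → ℝ) → ℝ) (L : NNReal)
    (hconv : ∀ i, ConvexOn ℝ Set.univ (f i)) (hdiff : ∀ i, Differentiable ℝ (f i))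
    (hsmooth : ∀ i, LipschitzWith L fun x => fderiv ℝ (f i) x)
    (r : (Fin d → ℝ) → ℝ) (hr : ConvexOn ℝ Set.univ r) (hlsc : LowerSemicontinuous r)
    (p : ℕ → Fin n → Fin d → ℝ) (p1 p2 : ℕ → Fin n → Fin n → Fin d → ℝ)
    (x y z : ℕ → Fin n → Fin d → ℝ)
    (m M : ℝ) (hm : 0 < m)
    (hpb : ∀ k i l, m ≤ p k i l)
    (hp1b : ∀ k i j l, G.Adj i j → m ≤ p1 k i j l ∧ p1 k i j l ≤ M)
    (hp2b : ∀ k i j l, G.Adj i j → |p2 k i j l| ≤ M)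
    (hp1sym : ∀ k i j, G.Adj i j → p1 k i j = p1 k j i)
    (hy0 : ∀ i, y 0 i = 0)
    (hz : ∀ k i u, diagProxObj r (p k i)
          (x k i - fun l => p k i l * (grad (f i) (x k i) l + y k i l)) (z (k + 1) i)
        ≤ diagProxObj r (p k i)
          (x k i - fun l => p k i l * (grad (f i) (x k i) l + y k i l)) u)
    (hy : ∀ k i, y (k + 1) i
      = y k i + ∑ j ∈ G.neighborFinset i, p1 k i j * (z (k + 1) i - z (k + 1) j))
    (hx : ∀ k i, x (k + 1) i
      = z (k + 1) i - ∑ j ∈ G.neighborFinset i, p2 k i j * (z (k + 1) i - z (k + 1) j))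
    (xs ys zs : Fin n → Fin d → ℝ)
    (hxc : ∀ i, Filter.Tendsto (fun k => x k i) Filter.atTop (nhds (xs i)))
    (hyc : ∀ i, Filter.Tendsto (fun k => y k i) Filter.atTop (nhds (ys i)))
    (hzc : ∀ i, Filter.Tendsto (fun k => z k i) Filter.atTop (nhds (zs i))) :
    ∃ xstar : Fin d → ℝ,
      (∀ u, (n : ℝ)⁻¹ * ∑ i, f i xstar + r xstar ≤ (n : ℝ)⁻¹ * ∑ i, f i u + r u) ∧
        (∀ i, xs i = xstar ∧ zs i = xstar) ∧
        ∀ i, (-(grad (f i) xstar) - ys i) ∈ subdiff r xstar := by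
  have hzc' i : Tendsto (fun k => z (k + 1) i) atTop (𝓝 (zs i)) :=
    (hzc i).comp (tendsto_add_atTop_nat 1)
  have hcons : ∀ i j, zs i = zs j := hconn.eq_of_tendsto_sum_mul_sub hm hp1b hzc' fun i => by
    simpa [hy] using ((hyc i).comp (tendsto_add_atTop_nat 1)).sub (hyc i)
  have hxz i : xs i = zs i := tendsto_nhds_unique ((hxc i).comp (tendsto_add_atTop_nat 1)) <| by
    simpa [Function.comp_def, hx] using
      (hzc' i).sub (SimpleGraph.tendsto_sum_mul_sub_of_forall_eq hp2b hzc' hcons i)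
  set xstar := zs ⟨0, hn⟩
  have hzs i : zs i = xstar := hcons i _
  have hxs i : xs i = xstar := (hxz i).trans (hzs i)
  have hys : ∑ i, ys i = 0 := tendsto_nhds_unique (tendsto_finsetSum _ fun i _ => hyc i) <| by
    simp [SimpleGraph.sum_eq_zero_of_symmetric_updates hp1sym hy0 hy]
  have hsub i : -(grad (f i) xstar) - ys i ∈ subdiff r xstar :=
    neg_grad_sub_mem_subdiff_of_tendsto (z := (z · i)) (hsmooth i).continuous hr hlsc hm
      (hpb · i) (hz · i) (by simpa [hxs i] using hxc i) (hyc i) (by simpa [hzs i] using hzc' i)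
  refine ⟨xstar, average_add_le_of_mem_subdiff hn (g := fun i => -ys i) (fun i => ?_)
    (by simp [hys]), fun i => ⟨hxs i, hzs i⟩, hsub⟩
  convert add_mem_subdiff (grad_mem_subdiff (hconv i) (hdiff i) xstar) (hsub i) using 1
  abel

theorem stmt11 {n d : ℕ} (hn : 0 < n)
    (G : SimpleGraph (Fin n)) [DecidableRel G.Adj] (hconn : G.Connected)
    (f : Fin n → (Fin d → ℝ) → ℝ) (L : NNReal)
    (hconv : ∀ i, ConvexOn ℝ Set.univ (f i)) (hdiff : ∀ i, Differentiable ℝ (f i))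
    (hsmooth : ∀ i, LipschitzWith L fun x => fderiv ℝ (f i) x)
    (r : (Fin d → ℝ) → ℝ) (hr : ConvexOn ℝ Set.univ r) (hlsc : LowerSemicontinuous r)
    (p : ℕ → Fin n → Fin d → ℝ) (p1 p2 : ℕ → Fin n → Fin n → Fin d → ℝ)
    (x y z : ℕ → Fin n → Fin d → ℝ)
    (m M : ℝ) (hm : 0 < m) (hmM : m < M)
    (hpb : ∀ k i l, m ≤ p k i l)
    (hp1b : ∀ k i j l, G.Adj i j → m ≤ p1 k i j l ∧ p1 k i j l ≤ M)
    (hp2b : ∀ k i j l, G.Adj i j → |p2 k i j l| ≤ M)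
    (hp1sym : ∀ k i j, G.Adj i j → p1 k i j = p1 k j i)
    (hy0 : ∀ i, y 0 i = 0)
    (hz : ∀ k i u, diagProxObj r (p k i)
          (x k i - fun l => p k i l * (grad (f i) (x k i) l + y k i l)) (z (k + 1) i)
        ≤ diagProxObj r (p k i)
          (x k i - fun l => p k i l * (grad (f i) (x k i) l + y k i l)) u)
    (hy : ∀ k i, y (k + 1) i
      = y k i + ∑ j ∈ G.neighborFinset i, p1 k i j * (z (k + 1) i - z (k + 1) j))
    (hx : ∀ k i, x (k + 1) i
      = z (k + 1) i - ∑ j ∈ G.neighborFinset i, p2 k i j * (z (k + 1) i - z (k + 1) j))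
    (xs ys zs : Fin n → Fin d → ℝ)
    (hxc : ∀ i, Filter.Tendsto (fun k => x k i) Filter.atTop (nhds (xs i)))
    (hyc : ∀ i, Filter.Tendsto (fun k => y k i) Filter.atTop (nhds (ys i)))
    (hzc : ∀ i, Filter.Tendsto (fun k => z k i) Filter.atTop (nhds (zs i))) :
    ∃ xstar : Fin d → ℝ,
      (∀ u, (n : ℝ)⁻¹ * ∑ i, f i xstar + r xstar ≤ (n : ℝ)⁻¹ * ∑ i, f i u + r u) ∧
        (∀ i, xs i = xstar ∧ zs i = xstar) ∧
        ∀ i, (-(grad (f i) xstar) - ys i) ∈ subdiff r xstar :=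
  stmt11_general hn G hconn f L hconv hdiff hsmooth r hr hlsc p p1 p2 x y z m M hm hpb hp1b hp2b
    hp1sym hy0 hz hy hx xs ys zs hxc hyc hzc
end
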